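/- For every integer n ≥ 2, the mean bubble size taken over all bubbles appearing in all linear chord diagrams on 2n vertices equals 2(2n-1)(n-1)/(4n-5); that is, (∑_{p=1}^{2n} p·B_{n,p}) · (4n-5) = 2(2n-1)(n-1) · (∑_{p=1}^{2n} B_{n,p}). -/
import Mathlib


open Finset

/-- A linear chord diagram on `2*n` vertices: a fixed-point-free involution of `Fin (2*n)`.
Vertex `v ∈ {1,...,2n}` is represented by the index `v-1 : Fin (2*n)`. -/
def IsLCD (n : ℕ) (f : Fin (2*n) → Fin (2*n)) : Prop :=
  ∀ i, f (f i) = i ∧ f i ≠ i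

/-- The chord `{i, i+1}` (1-based vertices) is a short chord of `f`. -/
def IsShort (n : ℕ) (f : Fin (2*n) → Fin (2*n)) (i : ℕ) : Prop :=
  ∃ (_h1 : 1 ≤ i) (h2 : i < 2*n), f ⟨i-1, by omega⟩ = ⟨i, h2⟩

/-- The interval `[a,b] ⊆ {1,...,2n}` (1-based) is a bubble of the diagram `f`:
it contains no short chord, its left end is the start of the diagram or is preceded
by the short chord `{a-2,a-1}`, and its right end is the end of the diagram or is
followed by the short chord `{b+1,b+2}`. -/
def IsBubble (n : ℕ) (f : Fin (2*n) → Fin (2*n)) (a b : ℕ) : Prop :=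
  1 ≤ a ∧ a ≤ b ∧ b ≤ 2*n ∧
  (∀ i, a ≤ i → i + 1 ≤ b → ¬ IsShort n f i) ∧
  (a = 1 ∨ IsShort n f (a-2)) ∧
  (b = 2*n ∨ IsShort n f (b+1))

open scoped Classical in
/-- `B n p` : the number of pairs `(D, [a,b])` where `D` is a linear chord diagram on
`2n` vertices and `[a,b]` is a bubble of `D` of size `p = b - a + 1`. -/
noncomputable def B (n p : ℕ) : ℕ :=
  ((univ ×ˢ (Finset.Icc 1 (2*n) ×ˢ Finset.Icc 1 (2*n))).filter
    (fun x : (Fin (2*n) → Fin (2*n)) × ℕ × ℕ =>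
      IsLCD n x.1 ∧ IsBubble n x.1 x.2.1 x.2.2 ∧ x.2.2 - x.2.1 + 1 = p)).card

open scoped Classical in
/-- `d n s` : the number of linear chord diagrams on `2n` vertices having exactly `s`
short chords. -/
noncomputable def d (n s : ℕ) : ℕ :=
  (univ.filter (fun f : Fin (2*n) → Fin (2*n) =>
    IsLCD n f ∧ ((Finset.Icc 1 (2*n-1)).filter (fun i => IsShort n f i)).card = s)).card

open scoped Classical in
/-- `pathMatch m j` : the number of `j`-edge matchings of the path graph on `m` vertices
`{1,...,m}` with edges `{i,i+1}`, `1 ≤ i ≤ m-1`.  An edge is encoded by its left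
endpoint; a set of edges is a matching iff no two left endpoints are consecutive. -/
noncomputable def pathMatch (m j : ℕ) : ℕ :=
  (((Finset.Icc 1 (m-1)).powerset).filter
    (fun S => S.card = j ∧ ∀ i ∈ S, i + 1 ∉ S)).card

/-- The double factorial `(2m-1)!! = (2m)! / (2^m * m!)`, so `(-1)!! = 1`. -/
def doubleFact (m : ℕ) : ℕ := (2*m).factorial / (2^m * m.factorial)


set_option linter.unusedSectionVars false

section InvCount

/-- fixed-point-free involution -/
def IsInv {α : Type*} (f : α → α) : Prop := ∀ i, f (f i) = i ∧ f i ≠ i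

open scoped Classical

noncomputable def invCount (α : Type*) [Fintype α] : ℕ :=
  (univ.filter (fun f : α → α => IsInv f)).card

variable {α β : Type*} [Fintype α] [DecidableEq α] [Fintype β] [DecidableEq β]

lemma invCount_congr (e : α ≃ β) : invCount α = invCount β := by
  classical
  unfold invCount
  apply Finset.card_bij (fun f _ => e ∘ f ∘ e.symm)
  · intro f hf
    simp only [mem_filter, mem_univ, true_and] at hf ⊢
    intro i
    constructor
    · simp [Function.comp, (hf (e.symm i)).1]
    · simp only [Function.comp, ne_eq]
      intro h
      exact (hf (e.symm i)).2 (by simpa using congrArg e.symm h)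
  · intro f hf g hg h
    funext x
    have := congrFun h (e x)
    simpa using congrArg e.symm this
  · intro g hg
    refine ⟨e.symm ∘ g ∘ e, ?_, ?_⟩
    · simp only [mem_filter, mem_univ, true_and] at hg ⊢
      intro i
      constructor
      · simp [Function.comp, (hg (e i)).1]
      · simp only [Function.comp, ne_eq]
        intro h
        exact (hg (e i)).2 (by simpa using congrArg e h)
    · funext x; simp

lemma invCount_eq_of_card_eq (h : Fintype.card α = Fintype.card β) :
    invCount α = invCount β := invCount_congr (Fintype.equivOfCardEq h)

variable (a b : α)

/-- restriction of `f` to the complement of `{a,b}` -/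
noncomputable def resMap (f : α → α) : {x : α // x ≠ a ∧ x ≠ b} → {x : α // x ≠ a ∧ x ≠ b} :=
  fun x => if h : f x.1 ≠ a ∧ f x.1 ≠ b then ⟨f x.1, h⟩ else x

lemma resMap_apply {f : α → α} (hf : IsInv f) (hab : f a = b)
    (x : {x : α // x ≠ a ∧ x ≠ b}) : (resMap a b f x).1 = f x.1 := by
  have hba : f b = a := by rw [← hab]; exact (hf a).1
  have h1 : f x.1 ≠ a := by
    intro h
    have := congrArg f h
    rw [(hf x.1).1, hab] at this
    exact x.2.2 this
  have h2 : f x.1 ≠ b := by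
    intro h
    have := congrArg f h
    rw [(hf x.1).1, hba] at this
    exact x.2.1 this
  simp [resMap, h1, h2]

/-- extension of `g` to `α`, swapping `a` and `b` -/
noncomputable def extMap (g : {x : α // x ≠ a ∧ x ≠ b} → {x : α // x ≠ a ∧ x ≠ b}) : α → α :=
  fun x => if hxa : x = a then b else if hxb : x = b then a else (g ⟨x, hxa, hxb⟩).1

@[simp] lemma extMap_a (g : {x : α // x ≠ a ∧ x ≠ b} → {x : α // x ≠ a ∧ x ≠ b}) :
    extMap a b g a = b := by simp [extMap]

lemma extMap_b (hab : a ≠ b) (g : {x : α // x ≠ a ∧ x ≠ b} → {x : α // x ≠ a ∧ x ≠ b}) :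
    extMap a b g b = a := by simp [extMap, hab.symm]

lemma extMap_other (g : {x : α // x ≠ a ∧ x ≠ b} → {x : α // x ≠ a ∧ x ≠ b})
    (x : α) (hxa : x ≠ a) (hxb : x ≠ b) :
    extMap a b g x = (g ⟨x, hxa, hxb⟩).1 := by simp [extMap, hxa, hxb]

lemma resMap_extMap (hab : a ≠ b) (g : {x : α // x ≠ a ∧ x ≠ b} → {x : α // x ≠ a ∧ x ≠ b}) :
    resMap a b (extMap a b g) = g := by
  funext x
  apply Subtype.ext
  have hx := extMap_other a b g x.1 x.2.1 x.2.2
  have hgx := (g ⟨x.1, x.2.1, x.2.2⟩).2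
  rw [resMap, dif_pos]
  · exact hx
  · rw [hx]; exact hgx

lemma card_res (hab : a ≠ b) (p : ({x : α // x ≠ a ∧ x ≠ b} → {x : α // x ≠ a ∧ x ≠ b}) → Prop) :
    (univ.filter (fun f : α → α => IsInv f ∧ f a = b ∧ p (resMap a b f))).card
      = (univ.filter (fun g : {x : α // x ≠ a ∧ x ≠ b} → {x : α // x ≠ a ∧ x ≠ b} =>
          IsInv g ∧ p g)).card := by
  classical
  apply Finset.card_bij (fun f _ => resMap a b f)
  · intro f hf
    simp only [mem_filter, mem_univ, true_and] at hf ⊢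
    obtain ⟨hinv, hfab, hp⟩ := hf
    refine ⟨fun x => ?_, hp⟩
    constructor
    · apply Subtype.ext
      rw [resMap_apply a b hinv hfab, resMap_apply a b hinv hfab, (hinv x.1).1]
    · intro h
      have := congrArg Subtype.val h
      rw [resMap_apply a b hinv hfab] at this
      exact (hinv x.1).2 this
  · intro f hf g hg h
    simp only [mem_filter, mem_univ, true_and] at hf hg
    obtain ⟨hinvf, hfab, -⟩ := hf
    obtain ⟨hinvg, hgab, -⟩ := hg
    have hfba : f b = a := by rw [← hfab]; exact (hinvf a).1
    have hgba : g b = a := by rw [← hgab]; exact (hinvg a).1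
    funext x
    by_cases hxa : x = a
    · rw [hxa, hfab, hgab]
    by_cases hxb : x = b
    · rw [hxb, hfba, hgba]
    · have := congrFun h ⟨x, hxa, hxb⟩
      have := congrArg Subtype.val this
      rwa [resMap_apply a b hinvf hfab, resMap_apply a b hinvg hgab] at this
  · intro g hg
    simp only [mem_filter, mem_univ, true_and] at hg
    obtain ⟨hinvg, hp⟩ := hg
    refine ⟨extMap a b g, ?_, ?_⟩
    · simp only [mem_filter, mem_univ, true_and]
      have hres := resMap_extMap a b hab g
      refine ⟨?_, extMap_a a b g, by rwa [hres]⟩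
      intro x
      by_cases hxa : x = a
      · rw [hxa, extMap_a a b g, extMap_b a b hab]
        exact ⟨rfl, hab.symm⟩
      by_cases hxb : x = b
      · rw [hxb, extMap_b a b hab, extMap_a a b g]
        exact ⟨rfl, hab⟩
      · rw [extMap_other a b g x hxa hxb]
        have h2 := (g ⟨x, hxa, hxb⟩).2
        rw [extMap_other a b g _ h2.1 h2.2]
        constructor
        · have := (hinvg ⟨x, hxa, hxb⟩).1
          have := congrArg Subtype.val this
          simpa using this
        · intro h
          have : g ⟨x, hxa, hxb⟩ = ⟨x, hxa, hxb⟩ := Subtype.ext h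
          exact (hinvg ⟨x, hxa, hxb⟩).2 this
    · exact resMap_extMap a b hab g

lemma card_filter_univ_eq {γ : Type*} {F1 F2 : Fintype γ} {p q : γ → Prop}
    {D1 : DecidablePred p} {D2 : DecidablePred q} (h : ∀ x, p x ↔ q x) :
    (@Finset.filter γ p D1 (@univ γ F1)).card = (@Finset.filter γ q D2 (@univ γ F2)).card := by
  have hF : F1 = F2 := Subsingleton.elim _ _
  subst hF
  congr 1
  exact Finset.filter_congr (fun x _ => h x)

lemma count_cond (hab : a ≠ b) :
    (univ.filter (fun f : α → α => IsInv f ∧ f a = b)).card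
      = invCount {x : α // x ≠ a ∧ x ≠ b} := by
  have h := card_res a b hab (fun _ => True)
  exact Eq.trans (card_filter_univ_eq (fun f => by simp)) (Eq.trans h
    (card_filter_univ_eq (fun g => by simp)))

lemma card_compl_pair (hab : a ≠ b) :
    Fintype.card {x : α // x ≠ a ∧ x ≠ b} = Fintype.card α - 2 := by
  classical
  rw [Fintype.card_subtype]
  have h : (univ.filter (fun x : α => x ≠ a ∧ x ≠ b)) = univ \ ({a, b} : Finset α) := by
    ext x; simp [not_or]
  rw [h, card_sdiff_of_subset (subset_univ _), card_univ, Finset.card_pair hab]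

lemma count_cond_fin (hab : a ≠ b) :
    (univ.filter (fun f : α → α => IsInv f ∧ f a = b)).card
      = invCount (Fin (Fintype.card α - 2)) := by
  rw [count_cond a b hab]
  exact invCount_eq_of_card_eq (by rw [card_compl_pair a b hab, Fintype.card_fin])

lemma count_cond2 (hab : a ≠ b) (c d : α) (hc : c ≠ a ∧ c ≠ b) (hd : d ≠ a ∧ d ≠ b)
    (hcd : c ≠ d) :
    (univ.filter (fun f : α → α => IsInv f ∧ f a = b ∧ f c = d)).card
      = invCount (Fin (Fintype.card α - 4)) := by
  classical
  have hstep : (univ.filter (fun f : α → α => IsInv f ∧ f a = b ∧ f c = d))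
      = (univ.filter (fun f : α → α => IsInv f ∧ f a = b ∧
          resMap a b f ⟨c, hc⟩ = ⟨d, hd⟩)) := by
    apply Finset.filter_congr
    intro f _
    constructor
    · rintro ⟨hinv, hfab, hfcd⟩
      refine ⟨hinv, hfab, ?_⟩
      apply Subtype.ext
      rw [resMap_apply a b hinv hfab]
      exact hfcd
    · rintro ⟨hinv, hfab, hres⟩
      refine ⟨hinv, hfab, ?_⟩
      have := congrArg Subtype.val hres
      rwa [resMap_apply a b hinv hfab] at this
  rw [hstep]
  have h2 := card_res a b hab (fun g => g ⟨c, hc⟩ = ⟨d, hd⟩)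
  have hcd' : (⟨c, hc⟩ : {x : α // x ≠ a ∧ x ≠ b}) ≠ ⟨d, hd⟩ := by
    intro h; exact hcd (congrArg Subtype.val h)
  have h3 := count_cond (⟨c, hc⟩ : {x : α // x ≠ a ∧ x ≠ b}) ⟨d, hd⟩ hcd'
  have e3 : invCount {y : {x : α // x ≠ a ∧ x ≠ b} // y ≠ ⟨c, hc⟩ ∧ y ≠ ⟨d, hd⟩}
      = invCount (Fin (Fintype.card α - 4)) := by
    apply invCount_eq_of_card_eq
    rw [Fintype.card_fin, card_compl_pair _ _ hcd', card_compl_pair a b hab]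
    exact Nat.sub_sub _ 2 2
  exact Eq.trans (Eq.trans (card_filter_univ_eq (fun f => Iff.rfl)) h2)
    (Eq.trans (Eq.trans (card_filter_univ_eq (fun g => Iff.rfl)) h3) e3)

lemma invCount_rec (a : α) :
    invCount α = (Fintype.card α - 1) * invCount (Fin (Fintype.card α - 2)) := by
  classical
  have h1 : invCount α
      = ∑ b ∈ (univ : Finset α), (univ.filter (fun f : α → α => IsInv f ∧ f a = b)).card := by
    unfold invCount
    rw [Finset.card_eq_sum_card_fiberwise (f := fun f : α → α => f a) (t := univ)
      (fun _ _ => mem_univ _)]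
    refine Finset.sum_congr rfl (fun b _ => ?_)
    rw [Finset.filter_filter]
    exact card_filter_univ_eq (fun f => Iff.rfl)
  rw [h1, ← Finset.add_sum_erase _ _ (mem_univ a)]
  have h2 : (univ.filter (fun f : α → α => IsInv f ∧ f a = a)).card = 0 := by
    rw [Finset.card_eq_zero]
    apply Finset.eq_empty_of_forall_notMem
    intro f hf
    simp only [mem_filter, mem_univ, true_and] at hf
    exact (hf.1 a).2 hf.2
  rw [h2, zero_add]
  rw [Finset.sum_congr rfl (fun b hb => count_cond_fin a b (Ne.symm (Finset.mem_erase.1 hb).1))]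
  rw [Finset.sum_const, Finset.card_erase_of_mem (mem_univ a), card_univ, smul_eq_mul]

end InvCount

section Bubbles
open scoped Classical

variable (N : ℕ) (S : Finset ℕ)

noncomputable def bubbleSet : Finset (ℕ × ℕ) :=
  ((Finset.Icc 1 N) ×ˢ (Finset.Icc 1 N)).filter
    (fun x => x.1 ≤ x.2 ∧ (∀ i, x.1 ≤ i → i + 1 ≤ x.2 → i ∉ S) ∧
      (x.1 = 1 ∨ x.1 - 2 ∈ S) ∧ (x.2 = N ∨ x.2 + 1 ∈ S))

def unc : Finset ℕ := (Finset.Icc 1 N).filter (fun x => x ∉ S ∧ x - 1 ∉ S)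

variable {N S}

lemma mem_bubbleSet {a b : ℕ} :
    (a, b) ∈ bubbleSet N S ↔ 1 ≤ a ∧ a ≤ b ∧ b ≤ N ∧
      (∀ i, a ≤ i → i + 1 ≤ b → i ∉ S) ∧ (a = 1 ∨ a - 2 ∈ S) ∧ (b = N ∨ b + 1 ∈ S) := by
  unfold bubbleSet
  simp only [mem_filter, mem_product, mem_Icc]
  constructor
  · rintro ⟨⟨⟨ha1, _⟩, ⟨_, hbN⟩⟩, h⟩
    exact ⟨ha1, h.1, hbN, h.2.1, h.2.2.1, h.2.2.2⟩
  · rintro ⟨ha1, hab, hbN, h1, h2, h3⟩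
    exact ⟨⟨⟨ha1, le_trans hab hbN⟩, ⟨le_trans ha1 hab, hbN⟩⟩, hab, h1, h2, h3⟩

lemma mem_unc {x : ℕ} : x ∈ unc N S ↔ (1 ≤ x ∧ x ≤ N) ∧ x ∉ S ∧ x - 1 ∉ S := by
  unfold unc; simp only [mem_filter, mem_Icc]

lemma Icc_subset_unc (hS : S ⊆ Finset.Icc 1 (N-1)) (hcons : ∀ s ∈ S, s + 1 ∉ S)
    {a b : ℕ} (hp : (a, b) ∈ bubbleSet N S) : Finset.Icc a b ⊆ unc N S := by
  rw [mem_bubbleSet] at hp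
  obtain ⟨ha1, hab, hbN, hni, hleft, hright⟩ := hp
  intro x hx
  rw [mem_Icc] at hx
  rw [mem_unc]
  refine ⟨⟨by omega, by omega⟩, ?_, ?_⟩
  · intro hxS
    by_cases h : x + 1 ≤ b
    · exact hni x hx.1 h hxS
    · have hxb' : x = b := by omega
      have hbS : b ∈ S := hxb' ▸ hxS
      have hbN1 : b ≤ N - 1 := (mem_Icc.1 (hS hbS)).2
      have hb1 : 1 ≤ b := (mem_Icc.1 (hS hbS)).1
      have hb2 : b + 1 ∈ S := by
        rcases hright with h' | h'
        · omega
        · exact h'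
      exact hcons b hbS hb2
  · intro hxS
    have hx11 : 1 ≤ x - 1 := (mem_Icc.1 (hS hxS)).1
    by_cases h : a ≤ x - 1
    · exact hni (x - 1) h (by omega) hxS
    · rcases hleft with h' | h'
      · omega
      · have h3 : 1 ≤ a - 2 := (mem_Icc.1 (hS h')).1
        have h4 := hcons (a - 2) h'
        have h5 : a - 2 + 1 = x - 1 := by omega
        rw [h5] at h4
        exact h4 hxS

/-- two bubbles sharing a point coincide -/
lemma bubble_unique (hS : S ⊆ Finset.Icc 1 (N-1)) (hcons : ∀ s ∈ S, s + 1 ∉ S)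
    {a b a' b' x : ℕ} (hp : (a, b) ∈ bubbleSet N S) (hq : (a', b') ∈ bubbleSet N S)
    (hx : x ∈ Finset.Icc a b) (hx' : x ∈ Finset.Icc a' b') : a = a' ∧ b = b' := by
  have key : ∀ a b a' b' x : ℕ, (a, b) ∈ bubbleSet N S → (a', b') ∈ bubbleSet N S →
      x ∈ Finset.Icc a b → x ∈ Finset.Icc a' b' → a < a' → False := by
    intro a b a' b' x hp hq hx hx' hlt
    have hpu := Icc_subset_unc hS hcons hp
    rw [mem_bubbleSet] at hp hq
    rw [mem_Icc] at hx hx'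
    rcases hq.2.2.2.2.1 with h1 | h1
    · omega
    · have hs1 : 1 ≤ a' - 2 := (mem_Icc.1 (hS h1)).1
      by_cases hc : a ≤ a' - 2
      · exact hp.2.2.2.1 (a' - 2) hc (by omega) h1
      · -- a = a' - 1, so a - 1 = a' - 2 ∈ S, but a ∈ unc
        have haU := hpu (mem_Icc.2 ⟨le_refl a, by omega⟩)
        rw [mem_unc] at haU
        have : a - 1 = a' - 2 := by omega
        exact haU.2.2 (this ▸ h1)
  have ha : a = a' := by
    rcases lt_trichotomy a a' with h | h | h
    · exact absurd (key a b a' b' x hp hq hx hx' h) (fun h => h)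
    · exact h
    · exact absurd (key a' b' a b x hq hp hx' hx h) (fun h => h)
  subst ha
  -- now show b = b'
  have keyb : ∀ b b' : ℕ, (a, b) ∈ bubbleSet N S → (a, b') ∈ bubbleSet N S →
      b < b' → False := by
    intro b b' hp hq hlt
    have hqu := Icc_subset_unc hS hcons hq
    rw [mem_bubbleSet] at hp hq
    have hb1 : b + 1 ∈ S := by
      rcases hp.2.2.2.2.2 with h | h
      · omega
      · exact h
    by_cases hc : b + 1 + 1 ≤ b'
    · exact hq.2.2.2.1 (b + 1) (by omega) hc hb1
    · -- b + 1 = b', b' ∈ S but b' ∈ unc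
      have : b + 1 = b' := by omega
      have hbU := hqu (mem_Icc.2 ⟨hq.2.1, le_refl b'⟩)
      rw [mem_unc] at hbU
      exact hbU.2.1 (this ▸ hb1)
  rcases lt_trichotomy b b' with h | h | h
  · exact absurd (keyb b b' hp hq h) (fun h => h)
  · exact ⟨rfl, h⟩
  · exact absurd (keyb b' b hq hp h) (fun h => h)

lemma L_left (hS : S ⊆ Finset.Icc 1 (N-1)) :
    ∀ x, x ∈ unc N S → ∃ a, a ≤ x ∧ (a = 1 ∨ a - 2 ∈ S) ∧ ∀ i, a ≤ i → i < x → i ∉ S := by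
  intro x
  induction x using Nat.strong_induction_on with
  | _ x ih =>
    intro hx
    rw [mem_unc] at hx
    obtain ⟨⟨hx1, hxN⟩, hxS, hxS'⟩ := hx
    by_cases h1 : x = 1
    · exact ⟨1, by omega, Or.inl rfl, fun i h h2 => by omega⟩
    by_cases h2 : x - 2 ∈ S
    · exact ⟨x, le_refl x, Or.inr h2, fun i h h2 => by omega⟩
    · have hxm : x - 1 ∈ unc N S := by
        rw [mem_unc]
        refine ⟨⟨by omega, by omega⟩, hxS', ?_⟩
        have h3 : x - 1 - 1 = x - 2 := by omega
        rw [h3]; exact h2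
      obtain ⟨a, ha1, ha2, ha3⟩ := ih (x - 1) (by omega) hxm
      refine ⟨a, by omega, ha2, ?_⟩
      intro i hi1 hi2
      by_cases hix : i < x - 1
      · exact ha3 i hi1 hix
      · have h4 : i = x - 1 := by omega
        rw [h4]; exact hxS'

lemma L_right (hS : S ⊆ Finset.Icc 1 (N-1)) :
    ∀ m x, N - x ≤ m → x ∈ unc N S →
      ∃ b, x ≤ b ∧ b ≤ N ∧ (b = N ∨ b + 1 ∈ S) ∧ ∀ i, x ≤ i → i < b → i ∉ S := by
  intro m
  induction m with
  | zero =>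
    intro x hm hx
    rw [mem_unc] at hx
    have hxN : x = N := by omega
    exact ⟨N, by omega, le_refl N, Or.inl rfl, fun i h h2 => by omega⟩
  | succ m ih =>
    intro x hm hx
    have hx' := hx
    rw [mem_unc] at hx'
    obtain ⟨⟨hx1, hxN⟩, hxS, hxS'⟩ := hx'
    by_cases hN : x = N
    · exact ⟨N, by omega, le_refl N, Or.inl rfl, fun i h h2 => by omega⟩
    by_cases hb : x + 1 ∈ S
    · exact ⟨x, le_refl x, by omega, Or.inr hb, fun i h h2 => by omega⟩
    · have hxm : x + 1 ∈ unc N S := by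
        rw [mem_unc]
        refine ⟨⟨by omega, by omega⟩, hb, ?_⟩
        have h3 : x + 1 - 1 = x := rfl
        rw [h3]; exact hxS
      obtain ⟨b, hb1, hb2, hb3, hb4⟩ := ih (x + 1) (by omega) hxm
      refine ⟨b, by omega, hb2, hb3, ?_⟩
      intro i hi1 hi2
      by_cases hix : x + 1 ≤ i
      · exact hb4 i hix hi2
      · have h4 : i = x := by omega
        rw [h4]; exact hxS

lemma L_cover (hS : S ⊆ Finset.Icc 1 (N-1)) {x : ℕ} (hx : x ∈ unc N S) :
    ∃ p ∈ bubbleSet N S, x ∈ Finset.Icc p.1 p.2 := by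
  obtain ⟨a, ha1, ha2, ha3⟩ := L_left hS x hx
  obtain ⟨b, hb1, hb2, hb3, hb4⟩ := L_right hS (N - x) x (le_refl _) hx
  rw [mem_unc] at hx
  refine ⟨(a, b), ?_, mem_Icc.2 ⟨ha1, hb1⟩⟩
  rw [mem_bubbleSet]
  have ha0 : 1 ≤ a := by
    rcases ha2 with h | h
    · omega
    · have := (mem_Icc.1 (hS h)).1; omega
  refine ⟨ha0, by omega, hb2, ?_, ha2, hb3⟩
  intro i hi1 hi2
  by_cases hix : i < x
  · exact ha3 i hi1 hix
  · exact hb4 i (by omega) (by omega)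

lemma unc_eq_biUnion (hS : S ⊆ Finset.Icc 1 (N-1)) (hcons : ∀ s ∈ S, s + 1 ∉ S) :
    unc N S = (bubbleSet N S).biUnion (fun p => Finset.Icc p.1 p.2) := by
  ext x
  simp only [mem_biUnion]
  constructor
  · exact fun hx => L_cover hS hx
  · rintro ⟨p, hp, hx⟩
    exact Icc_subset_unc hS hcons (by rwa [← Prod.mk.eta (p := p)] at hp) hx

lemma bubble_disj (hS : S ⊆ Finset.Icc 1 (N-1)) (hcons : ∀ s ∈ S, s + 1 ∉ S) :
    ∀ p ∈ bubbleSet N S, ∀ q ∈ bubbleSet N S, p ≠ q →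
      Disjoint (Finset.Icc p.1 p.2) (Finset.Icc q.1 q.2) := by
  intro p hp q hq hne
  rw [Finset.disjoint_left]
  intro x hxp hxq
  have hp' : (p.1, p.2) ∈ bubbleSet N S := by rwa [Prod.mk.eta]
  have hq' : (q.1, q.2) ∈ bubbleSet N S := by rwa [Prod.mk.eta]
  have := bubble_unique hS hcons hp' hq' hxp hxq
  exact hne (Prod.ext this.1 this.2)

lemma unc_card (hN : 1 ≤ N) (hS : S ⊆ Finset.Icc 1 (N-1)) (hcons : ∀ s ∈ S, s + 1 ∉ S) :
    (unc N S).card + 2 * S.card = N := by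
  have himg : (S.image (· + 1)).card = S.card :=
    Finset.card_image_of_injective _ (fun x y h => by omega)
  have hdisj : Disjoint S (S.image (· + 1)) := by
    rw [Finset.disjoint_left]
    intro x hx hx'
    obtain ⟨s, hs, hsx⟩ := Finset.mem_image.1 hx'
    exact hcons s hs (hsx ▸ hx)
  have hsub : S ∪ S.image (· + 1) ⊆ Finset.Icc 1 N := by
    intro x hx
    rcases Finset.mem_union.1 hx with h | h
    · have := mem_Icc.1 (hS h); exact mem_Icc.2 ⟨this.1, by omega⟩
    · obtain ⟨s, hs, hsx⟩ := Finset.mem_image.1 h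
      have := mem_Icc.1 (hS hs)
      exact mem_Icc.2 ⟨by omega, by omega⟩
  have hunc : unc N S = Finset.Icc 1 N \ (S ∪ S.image (· + 1)) := by
    ext x
    rw [mem_unc, Finset.mem_sdiff, Finset.mem_union, mem_Icc]
    constructor
    · rintro ⟨⟨h1, h2⟩, h3, h4⟩
      refine ⟨⟨h1, h2⟩, ?_⟩
      rintro (h | h)
      · exact h3 h
      · obtain ⟨s, hs, hsx⟩ := Finset.mem_image.1 h
        apply h4
        have : x - 1 = s := by omega
        rw [this]; exact hs
    · rintro ⟨⟨h1, h2⟩, h⟩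
      refine ⟨⟨h1, h2⟩, fun hx => h (Or.inl hx), fun hx => ?_⟩
      apply h
      right
      apply Finset.mem_image.2
      refine ⟨x - 1, hx, ?_⟩
      have h5 : 1 ≤ x - 1 := (mem_Icc.1 (hS hx)).1
      omega
  have hcard : (S ∪ S.image (· + 1)).card = 2 * S.card := by
    rw [Finset.card_union_of_disjoint hdisj, himg]; omega
  have hle : (S ∪ S.image (· + 1)).card ≤ N := by
    calc (S ∪ S.image (· + 1)).card ≤ (Finset.Icc 1 N).card := Finset.card_le_card hsub
    _ = N := by rw [Nat.card_Icc]; omega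
  rw [hunc, Finset.card_sdiff_of_subset hsub, Nat.card_Icc, hcard]
  omega

/-- sum of bubble sizes -/
lemma bubble_size_sum (hN : 1 ≤ N) (hS : S ⊆ Finset.Icc 1 (N-1)) (hcons : ∀ s ∈ S, s + 1 ∉ S) :
    (∑ p ∈ bubbleSet N S, (p.2 - p.1 + 1)) + 2 * S.card = N := by
  have h1 : (unc N S).card = ∑ p ∈ bubbleSet N S, (Finset.Icc p.1 p.2).card := by
    rw [unc_eq_biUnion hS hcons, Finset.card_biUnion (bubble_disj hS hcons)]
  have h2 : ∀ p ∈ bubbleSet N S, (Finset.Icc p.1 p.2).card = p.2 - p.1 + 1 := by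
    intro p hp
    have hp' : (p.1, p.2) ∈ bubbleSet N S := by rwa [Prod.mk.eta]
    rw [mem_bubbleSet] at hp'
    rw [Nat.card_Icc]
    omega
  have h3 := unc_card hN hS hcons
  rw [h1, Finset.sum_congr rfl h2] at h3
  exact h3

/-- number of bubbles -/
lemma bubble_count (hN : 1 ≤ N) (hS : S ⊆ Finset.Icc 1 (N-1)) (hcons : ∀ s ∈ S, s + 1 ∉ S) :
    (bubbleSet N S).card + (if 1 ∈ S then 1 else 0) + (if N - 1 ∈ S then 1 else 0)
      + (S.filter (fun s => s + 2 ∈ S)).card = S.card + 1 := by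
  classical
  -- step 1 : bubbles ↔ left endpoints
  have step1 : (bubbleSet N S).card
      = ((unc N S).filter (fun a => a = 1 ∨ a - 2 ∈ S)).card := by
    apply Finset.card_bij (fun p _ => p.1)
    · intro p hp
      have hp' : (p.1, p.2) ∈ bubbleSet N S := by rwa [Prod.mk.eta]
      rw [Finset.mem_filter]
      constructor
      · exact Icc_subset_unc hS hcons hp'
          (mem_Icc.2 ⟨le_refl _, (mem_bubbleSet.1 hp').2.1⟩)
      · exact (mem_bubbleSet.1 hp').2.2.2.2.1
    · intro p hp q hq h
      have hp' : (p.1, p.2) ∈ bubbleSet N S := by rwa [Prod.mk.eta]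
      have hq' : (q.1, q.2) ∈ bubbleSet N S := by rwa [Prod.mk.eta]
      have h1 : p.1 ∈ Finset.Icc p.1 p.2 := mem_Icc.2 ⟨le_refl _, (mem_bubbleSet.1 hp').2.1⟩
      have h2 : p.1 ∈ Finset.Icc q.1 q.2 := by
        rw [h]; exact mem_Icc.2 ⟨le_refl _, (mem_bubbleSet.1 hq').2.1⟩
      have := bubble_unique hS hcons hp' hq' h1 h2
      exact Prod.ext this.1 this.2
    · intro a ha
      rw [Finset.mem_filter] at ha
      obtain ⟨hau, hab⟩ := ha
      obtain ⟨b, hb1, hb2, hb3, hb4⟩ := L_right hS (N - a) a (le_refl _) hau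
      have hau' := mem_unc.1 hau
      refine ⟨(a, b), ?_, rfl⟩
      rw [mem_bubbleSet]
      refine ⟨hau'.1.1, hb1, hb2, ?_, hab, hb3⟩
      intro i hi1 hi2
      exact hb4 i hi1 (by omega)
  -- step 2 : left endpoints
  have step2 : ((unc N S).filter (fun a => a = 1 ∨ a - 2 ∈ S))
      = (if 1 ∈ S then (∅ : Finset ℕ) else {1})
        ∪ (S.filter (fun s => s + 2 ∉ S ∧ s ≠ N - 1)).image (· + 2) := by
    ext a
    rw [Finset.mem_filter, Finset.mem_union, mem_unc]
    constructor
    · rintro ⟨⟨⟨ha1, haN⟩, haS, haS'⟩, h | h⟩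
      · left
        subst h
        rw [if_neg haS]
        exact Finset.mem_singleton_self 1
      · right
        apply Finset.mem_image.2
        have h1 : 1 ≤ a - 2 := (mem_Icc.1 (hS h)).1
        refine ⟨a - 2, ?_, by omega⟩
        rw [Finset.mem_filter]
        refine ⟨h, ?_, ?_⟩
        · have : a - 2 + 2 = a := by omega
          rw [this]; exact haS
        · have h2 : a - 2 ≤ N - 1 := (mem_Icc.1 (hS h)).2
          omega
    · rintro (h | h)
      · by_cases h1 : 1 ∈ S
        · rw [if_pos h1] at h; exact absurd h (Finset.notMem_empty a)
        · rw [if_neg h1, Finset.mem_singleton] at h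
          subst h
          exact ⟨⟨⟨le_refl 1, hN⟩, h1, by
            intro hc
            have := (mem_Icc.1 (hS hc)).1
            omega⟩, Or.inl rfl⟩
      · obtain ⟨s, hs, hsa⟩ := Finset.mem_image.1 h
        rw [Finset.mem_filter] at hs
        obtain ⟨hsS, hs2, hsN⟩ := hs
        have hb1 : 1 ≤ s := (mem_Icc.1 (hS hsS)).1
        have hb2 : s ≤ N - 1 := (mem_Icc.1 (hS hsS)).2
        subst hsa
        refine ⟨⟨⟨by omega, by omega⟩, hs2, ?_⟩, Or.inr (by
          have : s + 2 - 2 = s := by omega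
          rw [this]; exact hsS)⟩
        have : s + 2 - 1 = s + 1 := by omega
        rw [this]
        exact hcons s hsS
  have hdisj2 : Disjoint (if 1 ∈ S then (∅ : Finset ℕ) else {1})
      ((S.filter (fun s => s + 2 ∉ S ∧ s ≠ N - 1)).image (· + 2)) := by
    rw [Finset.disjoint_left]
    intro x hx hx'
    obtain ⟨s, hs, hsx⟩ := Finset.mem_image.1 hx'
    have h1 : 1 ≤ s := (mem_Icc.1 (hS (Finset.mem_filter.1 hs).1)).1
    by_cases h2 : 1 ∈ S
    · rw [if_pos h2] at hx; exact Finset.notMem_empty x hx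
    · rw [if_neg h2, Finset.mem_singleton] at hx
      omega
  have himg2 : ((S.filter (fun s => s + 2 ∉ S ∧ s ≠ N - 1)).image (· + 2)).card
      = (S.filter (fun s => s + 2 ∉ S ∧ s ≠ N - 1)).card :=
    Finset.card_image_of_injective _ (fun x y h => by omega)
  -- step 3 : partition of S
  have step3 : S.card = (S.filter (fun s => s + 2 ∉ S ∧ s ≠ N - 1)).card
      + (S.filter (fun s => s + 2 ∈ S)).card + (if N - 1 ∈ S then 1 else 0) := by
    have hsplit := Finset.card_filter_add_card_filter_not
      (s := S) (p := fun s => s + 2 ∈ S)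
    have hsplit2 := Finset.card_filter_add_card_filter_not
      (s := S.filter (fun s => ¬(s + 2 ∈ S))) (p := fun s => s = N - 1)
    have he1 : (S.filter (fun s => ¬(s + 2 ∈ S))).filter (fun s => ¬(s = N - 1))
        = S.filter (fun s => s + 2 ∉ S ∧ s ≠ N - 1) := by
      rw [Finset.filter_filter]
    have he2 : (S.filter (fun s => ¬(s + 2 ∈ S))).filter (fun s => s = N - 1)
        = S.filter (fun s => s = N - 1) := by
      rw [Finset.filter_filter]
      apply Finset.filter_congr
      intro x hx
      constructor
      · rintro ⟨_, h⟩; exact h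
      · intro h
        refine ⟨?_, h⟩
        intro hc
        have := (mem_Icc.1 (hS hc)).2
        omega
    have he3 : (S.filter (fun s => s = N - 1)).card = if N - 1 ∈ S then 1 else 0 := by
      by_cases h : N - 1 ∈ S
      · rw [if_pos h]
        have : S.filter (fun s => s = N - 1) = {N - 1} := by
          ext x
          rw [Finset.mem_filter, Finset.mem_singleton]
          constructor
          · rintro ⟨_, h'⟩; exact h'
          · rintro rfl; exact ⟨h, rfl⟩
        rw [this, Finset.card_singleton]
      · rw [if_neg h]
        rw [Finset.card_eq_zero]
        apply Finset.eq_empty_of_forall_notMem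
        intro x hx
        rw [Finset.mem_filter] at hx
        exact h (hx.2 ▸ hx.1)
    rw [he1, he2, he3] at hsplit2
    omega
  rw [step1, step2, Finset.card_union_of_disjoint hdisj2, himg2, step3]
  by_cases h1 : 1 ∈ S <;> by_cases h2 : N - 1 ∈ S <;>
    simp only [h1, h2, if_true, if_false, Finset.card_empty, Finset.card_singleton] <;>
    omega

end Bubbles

set_option maxHeartbeats 1000000

section Glue

open scoped Classical

variable (n : ℕ)

noncomputable def Sf (f : Fin (2*n) → Fin (2*n)) : Finset ℕ :=
  (Finset.Icc 1 (2*n-1)).filter (fun i => IsShort n f i)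

noncomputable def LCDset : Finset (Fin (2*n) → Fin (2*n)) :=
  univ.filter (fun f => IsLCD n f)

variable {n}

lemma short_mem_Sf {f : Fin (2*n) → Fin (2*n)} {i : ℕ} :
    IsShort n f i ↔ i ∈ Sf n f := by
  unfold Sf
  rw [Finset.mem_filter, mem_Icc]
  constructor
  · intro h
    obtain ⟨h1, h2, h3⟩ := h
    exact ⟨⟨h1, by omega⟩, ⟨h1, h2, h3⟩⟩
  · exact fun h => h.2

lemma Sf_cons {f : Fin (2*n) → Fin (2*n)} (hf : IsLCD n f) :
    ∀ s ∈ Sf n f, s + 1 ∉ Sf n f := by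
  intro s hs hs1
  rw [← short_mem_Sf] at hs hs1
  obtain ⟨ha1, ha2, ha3⟩ := hs
  obtain ⟨hb1, hb2, hb3⟩ := hs1
  have hfix : f ⟨s, ha2⟩ = ⟨s - 1, by omega⟩ := by
    have := (hf ⟨s - 1, by omega⟩).1
    rw [ha3] at this
    exact this
  have heq : (⟨s + 1 - 1, by omega⟩ : Fin (2*n)) = ⟨s, ha2⟩ := by
    apply Fin.ext
    simp
  rw [heq, hfix] at hb3
  have := congrArg Fin.val hb3
  simp at this

lemma bubble_iff (hn : 1 ≤ n) {f : Fin (2*n) → Fin (2*n)} {a b : ℕ} :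
    IsBubble n f a b ↔ (a, b) ∈ bubbleSet (2*n) (Sf n f) := by
  rw [mem_bubbleSet]
  unfold IsBubble
  constructor
  · rintro ⟨h1, h2, h3, h4, h5, h6⟩
    refine ⟨h1, h2, h3, ?_, ?_, ?_⟩
    · intro i hi1 hi2 hiS
      exact h4 i hi1 hi2 (short_mem_Sf.2 hiS)
    · rcases h5 with h | h
      · exact Or.inl h
      · exact Or.inr (short_mem_Sf.1 h)
    · rcases h6 with h | h
      · exact Or.inl h
      · exact Or.inr (short_mem_Sf.1 h)
  · rintro ⟨h1, h2, h3, h4, h5, h6⟩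
    refine ⟨h1, h2, h3, ?_, ?_, ?_⟩
    · intro i hi1 hi2 hiS
      exact h4 i hi1 hi2 (short_mem_Sf.1 hiS)
    · rcases h5 with h | h
      · exact Or.inl h
      · exact Or.inr (short_mem_Sf.2 h)
    · rcases h6 with h | h
      · exact Or.inl h
      · exact Or.inr (short_mem_Sf.2 h)

lemma Sf_subset {f : Fin (2*n) → Fin (2*n)} : Sf n f ⊆ Finset.Icc 1 (2*n-1) :=
  Finset.filter_subset _ _

lemma filter_card_congr {γ : Type*} {s : Finset γ} {p q : γ → Prop}
    {D1 : DecidablePred p} {D2 : DecidablePred q} (h : ∀ x, p x ↔ q x) :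
    (@Finset.filter γ p D1 s).card = (@Finset.filter γ q D2 s).card := by
  congr 1
  exact Finset.filter_congr (fun x _ => h x)

lemma isShort_iff {f : Fin (2*n) → Fin (2*n)} {i : ℕ} (h1 : 1 ≤ i) (h2 : i < 2*n) :
    IsShort n f i ↔ f ⟨i-1, by omega⟩ = ⟨i, h2⟩ := by
  constructor
  · rintro ⟨_, _, h3⟩
    exact h3
  · intro h
    exact ⟨h1, h2, h⟩

lemma countShort (hn : 1 ≤ n) (i : ℕ) (h1 : 1 ≤ i) (h2 : i ≤ 2*n-1) :
    (univ.filter (fun f : Fin (2*n) → Fin (2*n) => IsLCD n f ∧ IsShort n f i)).card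
      = invCount (Fin (2*n-2)) := by
  have hi2 : i < 2*n := by omega
  have hab : (⟨i-1, by omega⟩ : Fin (2*n)) ≠ ⟨i, hi2⟩ := by
    intro h
    have := congrArg Fin.val h
    simp only [] at this
    omega
  have key := count_cond_fin (α := Fin (2*n)) ⟨i-1, by omega⟩ ⟨i, hi2⟩ hab
  have e : Fintype.card (Fin (2*n)) - 2 = 2*n-2 := by rw [Fintype.card_fin]
  rw [e] at key
  rw [← key]
  exact filter_card_congr (fun f => and_congr Iff.rfl (isShort_iff h1 hi2))

lemma countShort2 (hn : 2 ≤ n) (i : ℕ) (h1 : 1 ≤ i) (h2 : i + 2 ≤ 2*n-1) :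
    (univ.filter (fun f : Fin (2*n) → Fin (2*n) =>
        IsLCD n f ∧ IsShort n f i ∧ IsShort n f (i+2))).card
      = invCount (Fin (2*n-4)) := by
  have hi2 : i < 2*n := by omega
  have hi4 : i + 2 < 2*n := by omega
  have hi3 : i + 1 < 2*n := by omega
  have hab : (⟨i-1, by omega⟩ : Fin (2*n)) ≠ ⟨i, hi2⟩ := by
    intro h; have := congrArg Fin.val h; simp only [] at this; omega
  have hc : (⟨i+1, hi3⟩ : Fin (2*n)) ≠ ⟨i-1, by omega⟩ ∧ (⟨i+1, hi3⟩ : Fin (2*n)) ≠ ⟨i, hi2⟩ := by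
    constructor <;> (intro h; have := congrArg Fin.val h; simp only [] at this; omega)
  have hd : (⟨i+2, hi4⟩ : Fin (2*n)) ≠ ⟨i-1, by omega⟩ ∧ (⟨i+2, hi4⟩ : Fin (2*n)) ≠ ⟨i, hi2⟩ := by
    constructor <;> (intro h; have := congrArg Fin.val h; simp only [] at this; omega)
  have hcd : (⟨i+1, hi3⟩ : Fin (2*n)) ≠ ⟨i+2, hi4⟩ := by
    intro h; have := congrArg Fin.val h; simp only [] at this; omega
  have h12 : 1 ≤ i + 2 := by omega
  have key := count_cond2 (α := Fin (2*n)) ⟨i-1, by omega⟩ ⟨i, hi2⟩ hab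
    ⟨i+1, hi3⟩ ⟨i+2, hi4⟩ hc hd hcd
  have e : Fintype.card (Fin (2*n)) - 4 = 2*n-4 := by rw [Fintype.card_fin]
  rw [e] at key
  rw [← key]
  refine filter_card_congr ?_
  intro f
  exact and_congr Iff.rfl (and_congr (isShort_iff h1 hi2) (isShort_iff h12 hi4))

lemma count_LCD (hn : 1 ≤ n) :
    (LCDset n).card = (2*n-1) * invCount (Fin (2*n-2)) := by
  have h0 : (0 : ℕ) < 2*n := by omega
  have key := invCount_rec (α := Fin (2*n)) ⟨0, h0⟩
  have e1 : Fintype.card (Fin (2*n)) - 1 = 2*n-1 := by rw [Fintype.card_fin]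
  have e2 : Fintype.card (Fin (2*n)) - 2 = 2*n-2 := by rw [Fintype.card_fin]
  rw [e1, e2] at key
  rw [← key]
  unfold LCDset invCount
  exact card_filter_univ_eq (p := fun f => IsLCD n f) (q := fun f => IsInv f)
    (fun f => Iff.rfl)

lemma count_K (hn : 2 ≤ n) :
    invCount (Fin (2*n-2)) = (2*n-3) * invCount (Fin (2*n-4)) := by
  have h0 : (0:ℕ) < 2*n-2 := by omega
  have key := invCount_rec (α := Fin (2*n-2)) ⟨0, h0⟩
  have e1 : Fintype.card (Fin (2*n-2)) - 1 = 2*n-3 := by rw [Fintype.card_fin]; omega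
  have e2 : Fintype.card (Fin (2*n-2)) - 2 = 2*n-4 := by rw [Fintype.card_fin]; omega
  rw [e1, e2] at key
  exact key

variable (n) in
noncomputable def Qset : Finset ((Fin (2*n) → Fin (2*n)) × ℕ × ℕ) :=
  ((univ ×ˢ (Finset.Icc 1 (2*n) ×ˢ Finset.Icc 1 (2*n)))).filter
    (fun x => IsLCD n x.1 ∧ IsBubble n x.1 x.2.1 x.2.2)

lemma B_eq (p : ℕ) : B n p = ((Qset n).filter (fun x => x.2.2 - x.2.1 + 1 = p)).card := by
  unfold B Qset
  rw [Finset.filter_filter]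
  exact filter_card_congr (fun x => by tauto)

lemma Qmap : ∀ x ∈ Qset n, x.2.2 - x.2.1 + 1 ∈ Finset.Icc 1 (2*n) := by
  intro x hx
  unfold Qset at hx
  rw [Finset.mem_filter] at hx
  obtain ⟨-, -, hb⟩ := hx
  obtain ⟨h1, h2, h3, -⟩ := hb
  rw [mem_Icc]
  omega

lemma sumB_Q : ∑ p ∈ Finset.Icc 1 (2*n), B n p = (Qset n).card := by
  rw [Finset.sum_congr rfl (fun p _ => B_eq p)]
  exact (Finset.card_eq_sum_card_fiberwise Qmap).symm

lemma sumpB_Q : ∑ p ∈ Finset.Icc 1 (2*n), p * B n p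
    = ∑ x ∈ Qset n, (x.2.2 - x.2.1 + 1) := by
  have h1 : ∀ p ∈ Finset.Icc 1 (2*n), p * B n p
      = ∑ x ∈ (Qset n).filter (fun x => x.2.2 - x.2.1 + 1 = p), (x.2.2 - x.2.1 + 1) := by
    intro p _
    rw [B_eq p]
    rw [Finset.sum_congr rfl (fun x hx => (Finset.mem_filter.1 hx).2)]
    rw [Finset.sum_const, smul_eq_mul, mul_comm]
  rw [Finset.sum_congr rfl h1]
  exact Finset.sum_fiberwise_of_maps_to Qmap _

lemma Q_fiber_sum (hn : 1 ≤ n) (f : Fin (2*n) → Fin (2*n)) (hf : IsLCD n f)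
    (w : ℕ × ℕ → ℕ) :
    ∑ x ∈ (Qset n).filter (fun x => x.1 = f), w x.2
      = ∑ q ∈ bubbleSet (2*n) (Sf n f), w q := by
  apply Finset.sum_bij (fun x _ => x.2)
  · intro x hx
    rw [Finset.mem_filter] at hx
    obtain ⟨hxQ, hx1⟩ := hx
    unfold Qset at hxQ
    rw [Finset.mem_filter] at hxQ
    have hb := hxQ.2.2
    rw [hx1] at hb
    have := (bubble_iff hn).1 hb
    rwa [Prod.mk.eta] at this
  · intro x hx y hy hxy
    rw [Finset.mem_filter] at hx hy
    exact Prod.ext (hx.2.trans hy.2.symm) hxy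
  · intro q hq
    have hq' : (q.1, q.2) ∈ bubbleSet (2*n) (Sf n f) := by rwa [Prod.mk.eta]
    have hb := (bubble_iff hn).2 hq'
    refine ⟨(f, q), ?_, rfl⟩
    rw [Finset.mem_filter]
    refine ⟨?_, rfl⟩
    unfold Qset
    rw [Finset.mem_filter, Finset.mem_product]
    have hm := mem_bubbleSet.1 hq'
    refine ⟨⟨mem_univ _, ?_⟩, hf, hb⟩
    rw [Finset.mem_product, mem_Icc, mem_Icc]
    exact ⟨⟨hm.1, le_trans hm.2.1 hm.2.2.1⟩, ⟨le_trans hm.1 hm.2.1, hm.2.2.1⟩⟩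
  · intro x hx
    rfl

lemma Q_fiber_empty (f : Fin (2*n) → Fin (2*n)) (hf : ¬ IsLCD n f) :
    (Qset n).filter (fun x => x.1 = f) = ∅ := by
  apply Finset.eq_empty_of_forall_notMem
  intro x hx
  rw [Finset.mem_filter] at hx
  obtain ⟨hxQ, hx1⟩ := hx
  unfold Qset at hxQ
  rw [Finset.mem_filter] at hxQ
  exact hf (hx1 ▸ hxQ.2.1)

lemma sum_over_fibers (w : ℕ × ℕ → ℕ) (hn : 1 ≤ n) :
    ∑ x ∈ Qset n, w x.2 = ∑ f ∈ LCDset n, ∑ q ∈ bubbleSet (2*n) (Sf n f), w q := by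
  have h := Finset.sum_fiberwise_of_maps_to (s := Qset n)
    (g := fun x => x.1) (t := (univ : Finset (Fin (2*n) → Fin (2*n))))
    (fun x _ => mem_univ _) (fun x => w x.2)
  rw [← h]
  unfold LCDset
  rw [Finset.sum_filter]
  apply Finset.sum_congr rfl
  intro f _
  by_cases hf : IsLCD n f
  · rw [if_pos hf, Q_fiber_sum hn f hf w]
  · rw [if_neg hf, Q_fiber_empty f hf, Finset.sum_empty]

lemma sumB_main (hn : 1 ≤ n) :
    ∑ p ∈ Finset.Icc 1 (2*n), B n p
      = ∑ f ∈ LCDset n, (bubbleSet (2*n) (Sf n f)).card := by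
  rw [sumB_Q, Finset.card_eq_sum_ones]
  rw [sum_over_fibers (fun _ => 1) hn]
  exact Finset.sum_congr rfl (fun f _ => (Finset.card_eq_sum_ones _).symm)

lemma sumpB_main (hn : 1 ≤ n) :
    ∑ p ∈ Finset.Icc 1 (2*n), p * B n p
      = ∑ f ∈ LCDset n, ∑ q ∈ bubbleSet (2*n) (Sf n f), (q.2 - q.1 + 1) := by
  rw [sumpB_Q]
  exact sum_over_fibers (fun q => q.2 - q.1 + 1) hn

lemma sumS (hn : 1 ≤ n) :
    ∑ f ∈ LCDset n, (Sf n f).card = (2*n-1) * invCount (Fin (2*n-2)) := by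
  have h1 : ∀ f ∈ LCDset n, (Sf n f).card
      = ∑ i ∈ Finset.Icc 1 (2*n-1), if IsShort n f i then 1 else 0 := by
    intro f _
    exact Finset.card_filter _ _
  rw [Finset.sum_congr rfl h1, Finset.sum_comm]
  have h2 : ∀ i ∈ Finset.Icc 1 (2*n-1),
      (∑ f ∈ LCDset n, if IsShort n f i then 1 else 0) = invCount (Fin (2*n-2)) := by
    intro i hi
    rw [mem_Icc] at hi
    rw [← Finset.card_filter]
    unfold LCDset
    rw [Finset.filter_filter]
    rw [← countShort hn i hi.1 hi.2]
  rw [Finset.sum_congr rfl h2, Finset.sum_const, smul_eq_mul, Nat.card_Icc]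
  have e : 2*n - 1 + 1 - 1 = 2*n - 1 := by omega
  rw [e]

lemma sumIf (hn : 1 ≤ n) (i : ℕ) (h1 : 1 ≤ i) (h2 : i ≤ 2*n-1) :
    (∑ f ∈ LCDset n, if i ∈ Sf n f then 1 else 0) = invCount (Fin (2*n-2)) := by
  rw [← Finset.card_filter]
  unfold LCDset
  rw [Finset.filter_filter]
  rw [← countShort hn i h1 h2]
  exact filter_card_congr (fun f => and_congr Iff.rfl short_mem_Sf.symm)

lemma sumPairs (hn : 2 ≤ n) :
    ∑ f ∈ LCDset n, ((Sf n f).filter (fun s => s + 2 ∈ Sf n f)).card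
      = (2*n-3) * invCount (Fin (2*n-4)) := by
  have h1 : ∀ f ∈ LCDset n, ((Sf n f).filter (fun s => s + 2 ∈ Sf n f)).card
      = ∑ i ∈ Finset.Icc 1 (2*n-1),
          if (IsShort n f i ∧ IsShort n f (i+2)) then 1 else 0 := by
    intro f _
    unfold Sf
    rw [Finset.filter_filter]
    rw [Finset.card_filter]
    apply Finset.sum_congr rfl
    intro i _
    congr 1
    · exact propext (and_congr Iff.rfl short_mem_Sf.symm)
  rw [Finset.sum_congr rfl h1, Finset.sum_comm]
  have h2 : ∀ i ∈ Finset.Icc 1 (2*n-1),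
      (∑ f ∈ LCDset n, if (IsShort n f i ∧ IsShort n f (i+2)) then 1 else 0)
        = if i ≤ 2*n-3 then invCount (Fin (2*n-4)) else 0 := by
    intro i hi
    rw [mem_Icc] at hi
    rw [← Finset.card_filter]
    by_cases hc : i ≤ 2*n-3
    · rw [if_pos hc]
      unfold LCDset
      rw [Finset.filter_filter]
      rw [← countShort2 hn i hi.1 (by omega)]
    · rw [if_neg hc]
      rw [Finset.card_eq_zero]
      apply Finset.eq_empty_of_forall_notMem
      intro f hf
      rw [Finset.mem_filter] at hf
      obtain ⟨-, -, -, h4, -⟩ := hf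
      omega
  rw [Finset.sum_congr rfl h2]
  rw [Finset.sum_ite, Finset.sum_const_zero, add_zero, Finset.sum_const, smul_eq_mul]
  congr 1
  have : Finset.filter (fun i => i ≤ 2*n-3) (Finset.Icc 1 (2*n-1)) = Finset.Icc 1 (2*n-3) := by
    ext i
    rw [Finset.mem_filter, mem_Icc, mem_Icc]
    omega
  rw [this, Nat.card_Icc]
  omega

end Glue

/-- For every `n ≥ 2`, the mean bubble size equals `2(2n-1)(n-1)/(4n-5)`:
`(∑ p·B_{n,p})·(4n-5) = 2(2n-1)(n-1)·(∑ B_{n,p})`. -/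
theorem mean_bubble_size (n : ℕ) (hn : 2 ≤ n) :
    (∑ p ∈ Finset.Icc 1 (2*n), p * B n p) * (4*n-5) =
      2 * (2*n-1) * (n-1) * ∑ p ∈ Finset.Icc 1 (2*n), B n p := by
  classical
  have hn1 : 1 ≤ n := by omega
  have hN1 : 1 ≤ 2*n := by omega
  have E1 : (∑ p ∈ Finset.Icc 1 (2*n), p * B n p) + 2 * ∑ f ∈ LCDset n, (Sf n f).card
      = 2*n * (LCDset n).card := by
    rw [sumpB_main hn1, Finset.mul_sum, ← Finset.sum_add_distrib]
    have h : ∀ f ∈ LCDset n,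
        (∑ q ∈ bubbleSet (2*n) (Sf n f), (q.2 - q.1 + 1)) + 2 * (Sf n f).card = 2*n := by
      intro f hf
      have hf' : IsLCD n f := (Finset.mem_filter.1 hf).2
      exact bubble_size_sum hN1 Sf_subset (Sf_cons hf')
    rw [Finset.sum_congr rfl h, Finset.sum_const, smul_eq_mul, mul_comm]
  have E2 : (∑ p ∈ Finset.Icc 1 (2*n), B n p)
      + invCount (Fin (2*n-2)) + invCount (Fin (2*n-2)) + (2*n-3) * invCount (Fin (2*n-4))
      = (∑ f ∈ LCDset n, (Sf n f).card) + (LCDset n).card := by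
    have h : ∀ f ∈ LCDset n,
        (bubbleSet (2*n) (Sf n f)).card + (if 1 ∈ Sf n f then 1 else 0)
          + (if 2*n-1 ∈ Sf n f then 1 else 0)
          + ((Sf n f).filter (fun s => s + 2 ∈ Sf n f)).card
        = (Sf n f).card + 1 := by
      intro f hf
      have hf' : IsLCD n f := (Finset.mem_filter.1 hf).2
      exact bubble_count hN1 Sf_subset (Sf_cons hf')
    have hsum := Finset.sum_congr rfl h
    rw [Finset.sum_add_distrib, Finset.sum_add_distrib, Finset.sum_add_distrib,
      Finset.sum_add_distrib, Finset.sum_const, smul_eq_mul, mul_one] at hsum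
    rw [sumIf hn1 1 (le_refl 1) (by omega), sumIf hn1 (2*n-1) (by omega) (le_refl _),
      sumPairs hn, ← sumB_main hn1] at hsum
    exact hsum
  have hL : (LCDset n).card = (2*n-1) * invCount (Fin (2*n-2)) := count_LCD hn1
  have hS : (∑ f ∈ LCDset n, (Sf n f).card) = (2*n-1) * invCount (Fin (2*n-2)) := sumS hn1
  have hK : invCount (Fin (2*n-2)) = (2*n-3) * invCount (Fin (2*n-4)) := count_K hn
  obtain ⟨m, rfl⟩ : ∃ m, n = m + 2 := ⟨n - 2, by omega⟩
  have e1 : 2*(m+2)-1 = 2*m+3 := by omega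
  have e2 : 2*(m+2)-3 = 2*m+1 := by omega
  rw [e1] at hL hS
  rw [e2] at hK E2
  rw [hK] at hL hS E2
  rw [hS, hL] at E1
  rw [hS, hL] at E2
  set a := invCount (Fin (2*(m+2)-4)) with ha
  set t := (2*m+1) * a with ht
  set z := (2*m+3) * t with hz
  have hpB : (∑ p ∈ Finset.Icc 1 (2*(m+2)), p * B (m+2) p) = (2*m+2) * z := by
    have hexp : 2*(m+2) * z = (2*m+2) * z + 2 * z := by ring
    rw [hexp] at E1
    exact Nat.add_right_cancel E1
  have hB : (∑ p ∈ Finset.Icc 1 (2*(m+2)), B (m+2) p) = (4*m+3) * t := by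
    have hexp : z + z = (4*m+3)*t + (t + t + t) := by rw [hz]; ring
    have hre : (∑ p ∈ Finset.Icc 1 (2*(m+2)), B (m+2) p) + t + t + t
        = (∑ p ∈ Finset.Icc 1 (2*(m+2)), B (m+2) p) + (t + t + t) := by ring
    rw [hre, hexp] at E2
    exact Nat.add_right_cancel E2
  have g1 : 4*(m+2)-5 = 4*m+3 := by omega
  have g3 : (m+2)-1 = m+1 := by omega
  rw [hpB, hB, g1, e1, g3, hz, ht]
  ring
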